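/- Let c > 0 and let α ≥ α' ≥ 0 be real numbers. For a real parameter γ ≥ 0 define the restricted Paley–Wiener space B_c^{(γ)} as the set of f ∈ L²(ℝ) whose Fourier transform f̂ vanishes a.e. outside [−c,c] and satisfies ∫_{−c}^{c} |f̂(ξ)|² (1−(ξ/c)²)^{−γ} dξ < ∞, each f being identified with its continuous representative f(t) = (1/2π)∫_{−c}^{c} e^{itξ} f̂(ξ) dξ. For n ∈ ℕ define λ_n^{(γ)}(c) = sup { inf { 2π ∫_{−1}^{1} |f(t)|² (1−t²)^γ dt / ∫_{−c}^{c} |f̂(ξ)|² (1−(ξ/c)²)^{−γ} dξ : f ∈ S, f ≠ 0 } : S an (n+1)-dimensional subspace of B_c^{(γ)} }. Then for every n ∈ ℕ: λ_n^{(α)}(c) ≤ λ_n^{(α')}(c). -/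

import Mathlib

open MeasureTheory

/-- The continuous representative of the band-limited function with Fourier transform `F`
supported in `[-c,c]`: `f(t) = (1/2π) ∫_{-c}^{c} e^{itξ} F(ξ) dξ`. -/
noncomputable def invTrans (c : ℝ) (F : ℝ → ℂ) (t : ℝ) : ℂ :=
  (1 / (2 * Real.pi)) * ∫ ξ in (-c)..c, Complex.exp (Complex.I * (t * ξ : ℝ)) * F ξ

/-- The restricted Paley–Wiener space `B_c^{(γ)}`, parametrized by the Fourier transforms
`F = f̂` of its elements (each `f` being identified with its continuous representative
`invTrans c F`): `F` vanishes a.e. outside `[-c,c]` and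
`∫_{-c}^{c} |F(ξ)|² (1-(ξ/c)²)^{-γ} dξ < ∞`. -/
def PWspace (c γ : ℝ) : Set (ℝ → ℂ) :=
  {F | (∀ᵐ ξ : ℝ, c < |ξ| → F ξ = 0) ∧
    IntervalIntegrable (fun ξ => ‖F ξ‖ ^ 2 * (1 - (ξ / c) ^ 2) ^ (-γ)) volume (-c) c}

/-- The energy concentration ratio
`2π ∫_{-1}^{1} |f(t)|² (1-t²)^γ dt / ∫_{-c}^{c} |f̂(ξ)|² (1-(ξ/c)²)^{-γ} dξ`. -/
noncomputable def concRatio (c γ : ℝ) (F : ℝ → ℂ) : ℝ :=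
  2 * Real.pi * (∫ t in (-1 : ℝ)..1, ‖invTrans c F t‖ ^ 2 * (1 - t ^ 2) ^ γ) /
    ∫ ξ in (-c)..c, ‖F ξ‖ ^ 2 * (1 - (ξ / c) ^ 2) ^ (-γ)

/-- The eigenvalue `λ_n^{(γ)}(c)`, defined by the max–min principle over
`(n+1)`-dimensional subspaces of the restricted Paley–Wiener space `B_c^{(γ)}`. -/
noncomputable def lamMaxMin (c γ : ℝ) (n : ℕ) : ℝ :=
  sSup {r : ℝ | ∃ S : Submodule ℂ (ℝ → ℂ), Module.finrank ℂ S = n + 1 ∧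
    (S : Set (ℝ → ℂ)) ⊆ PWspace c γ ∧
    r = sInf {x : ℝ | ∃ F ∈ S, F ≠ (0 : ℝ → ℂ) ∧ x = concRatio c γ F}}

/-!
Raising `γ` shrinks `B_c^{(γ)}`, because the weight `(1 - (ξ/c)²)^{-γ}` only grows, and for a
fixed `F` it lowers the concentration ratio: its numerator weight `(1 - t²)^γ` decreases while
its denominator grows. So every subspace admissible for `α` is admissible for `α'`, with a larger
inner infimum. The outer supremum for `α'` is over a set bounded above, since
`|f(t)| ≤ (1/2π) ∫ |F|` and Cauchy–Schwarz bound every ratio by `2c/π`.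
-/

open MeasureTheory Set
open scoped Interval

theorem sq_intervalIntegral_le_mul_integral_sq {f : ℝ → ℝ} {a b : ℝ} (hab : a ≤ b)
    (hf : IntervalIntegrable f volume a b)
    (hf2 : IntervalIntegrable (fun x => f x ^ 2) volume a b) :
    (∫ x in a..b, f x) ^ 2 ≤ (b - a) * ∫ x in a..b, f x ^ 2 := by
  have hquad : ∀ m : ℝ, 0 ≤ (b - a) * (m * m) + (-2 * ∫ x in a..b, f x) * m +
      ∫ x in a..b, f x ^ 2 := by
    intro m
    have hexpand : ∫ x in a..b, (f x - m) ^ 2 =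
        (b - a) * (m * m) + (-2 * ∫ x in a..b, f x) * m + ∫ x in a..b, f x ^ 2 := by
      have hlin : IntervalIntegrable (fun x => f x ^ 2 - 2 * m * f x) volume a b :=
        hf2.sub (hf.const_mul _)
      calc ∫ x in a..b, (f x - m) ^ 2 = ∫ x in a..b, ((f x ^ 2 - 2 * m * f x) + m ^ 2) := by
            congr 1; ext x; ring
        _ = _ := by
          rw [intervalIntegral.integral_add hlin intervalIntegrable_const,
            intervalIntegral.integral_sub hf2 (hf.const_mul _),
            intervalIntegral.integral_const_mul, intervalIntegral.integral_const, smul_eq_mul]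
          ring
    exact hexpand ▸ intervalIntegral.integral_nonneg hab fun _ _ => sq_nonneg _
  have := discrim_le_zero hquad
  rw [discrim] at this
  linarith

theorem intervalIntegrable_cexp_mul_iff (c t : ℝ) (F : ℝ → ℂ) :
    IntervalIntegrable (fun ξ => Complex.exp (Complex.I * (t * ξ : ℝ)) * F ξ) volume (-c) c ↔
      IntervalIntegrable F volume (-c) c := by
  refine ⟨fun h => ?_, fun h => h.continuousOn_mul (by fun_prop)⟩
  have hcancel := h.continuousOn_mul (g := fun ξ : ℝ => Complex.exp (-(Complex.I * (t * ξ : ℝ))))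
    (by fun_prop)
  refine hcancel.congr fun ξ _ => ?_
  simp only [← mul_assoc, ← Complex.exp_add, neg_add_cancel, Complex.exp_zero, one_mul]

theorem Submodule.ne_bot_of_finrank_eq_succ {R M : Type*} [Semiring R] [Nontrivial R]
    [AddCommMonoid M] [Module R M] {S : Submodule R M} {n : ℕ}
    (h : Module.finrank R S = n + 1) : S ≠ ⊥ := by
  rintro rfl
  simp at h

section

variable {c γ : ℝ} {F : ℝ → ℂ}

theorem invTrans_eq_zero_of_not_intervalIntegrable (hF : ¬ IntervalIntegrable F volume (-c) c) :
    invTrans c F = 0 := by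
  funext t
  rw [invTrans, intervalIntegral.integral_undef, mul_zero, Pi.zero_apply]
  exact fun h => hF ((intervalIntegrable_cexp_mul_iff c t F).mp h)

theorem continuous_invTrans (c : ℝ) (F : ℝ → ℂ) : Continuous (invTrans c F) := by
  by_cases hF : IntervalIntegrable F volume (-c) c
  · refine continuous_const.mul (intervalIntegral.continuous_of_dominated_interval
      (bound := fun ξ => ‖F ξ‖) (fun t => ?_) (fun t => ?_) hF.norm ?_)
    · exact (intervalIntegrable_iff.mp
        ((intervalIntegrable_cexp_mul_iff c t F).mpr hF)).aestronglyMeasurable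
    · filter_upwards with ξ _
      rw [norm_mul, Complex.norm_exp_I_mul_ofReal, one_mul]
    · filter_upwards with ξ _
      fun_prop
  · rw [invTrans_eq_zero_of_not_intervalIntegrable hF]
    exact continuous_zero

theorem norm_invTrans_le (hc : 0 ≤ c) (F : ℝ → ℂ) (t : ℝ) :
    ‖invTrans c F t‖ ≤ (∫ ξ in (-c)..c, ‖F ξ‖) / (2 * Real.pi) := by
  have hint : ‖∫ ξ in (-c)..c, Complex.exp (Complex.I * (t * ξ : ℝ)) * F ξ‖ ≤
      ∫ ξ in (-c)..c, ‖F ξ‖ := by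
    refine (intervalIntegral.norm_integral_le_integral_norm (by linarith)).trans_eq ?_
    simp only [norm_mul, Complex.norm_exp_I_mul_ofReal, one_mul]
  rw [invTrans, norm_mul, norm_div, norm_one, Complex.norm_mul, Complex.norm_ofNat,
    Complex.norm_real, Real.norm_of_nonneg Real.pi_pos.le, one_div_mul_eq_div]
  gcongr

theorem one_sub_div_sq_nonneg {ξ : ℝ} (hξ : ξ ∈ Icc (-c) c) : 0 ≤ 1 - (ξ / c) ^ 2 := by
  rw [sub_nonneg, div_pow]
  exact div_le_one_of_le₀ (sq_le_sq' hξ.1 hξ.2) (sq_nonneg c)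

theorem one_sub_div_sq_pos {ξ : ℝ} (hξ : ξ ∈ Ioo (-c) c) : 0 < 1 - (ξ / c) ^ 2 := by
  have hc : 0 < c := by linarith [hξ.1, hξ.2]
  rw [sub_pos, div_pow, div_lt_one (by positivity)]
  exact sq_lt_sq' hξ.1 hξ.2

theorem one_sub_div_sq_rpow_neg_le {ξ α α' : ℝ} (hξ : ξ ∈ Ioo (-c) c) (h : α' ≤ α) :
    (1 - (ξ / c) ^ 2) ^ (-α') ≤ (1 - (ξ / c) ^ 2) ^ (-α) :=
  Real.rpow_le_rpow_of_exponent_ge (one_sub_div_sq_pos hξ) (sub_le_self _ (sq_nonneg _))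
    (neg_le_neg h)

theorem PWspace_anti (hc : 0 ≤ c) {α α' : ℝ} (h : α' ≤ α) : PWspace c α ⊆ PWspace c α' := by
  rintro F ⟨hsupp, hint⟩
  refine ⟨hsupp, ?_⟩
  have hw : Continuous fun ξ : ℝ => (1 - (ξ / c) ^ 2) ^ (α - α') :=
    (Real.continuous_rpow_const (sub_nonneg.2 h)).comp (by fun_prop)
  refine (hint.mul_continuousOn hw.continuousOn).congr_uIoo fun ξ hξ => ?_
  rw [uIoo_of_le (by linarith)] at hξ
  dsimp only
  rw [mul_assoc, ← Real.rpow_add (one_sub_div_sq_pos hξ), show -α + (α - α') = -α' by ring]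

noncomputable def concNum (c γ : ℝ) (F : ℝ → ℂ) : ℝ :=
  ∫ t in (-1 : ℝ)..1, ‖invTrans c F t‖ ^ 2 * (1 - t ^ 2) ^ γ

noncomputable def concDen (c γ : ℝ) (F : ℝ → ℂ) : ℝ :=
  ∫ ξ in (-c)..c, ‖F ξ‖ ^ 2 * (1 - (ξ / c) ^ 2) ^ (-γ)

theorem concRatio_eq : concRatio c γ F = 2 * Real.pi * concNum c γ F / concDen c γ F := rfl

theorem concNum_nonneg (c γ : ℝ) (F : ℝ → ℂ) : 0 ≤ concNum c γ F := by
  refine intervalIntegral.integral_nonneg (by norm_num) fun t ht => ?_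
  have ht2 : 0 ≤ 1 - t ^ 2 := by nlinarith [ht.1, ht.2]
  positivity

theorem concDen_nonneg (hc : 0 ≤ c) (γ : ℝ) (F : ℝ → ℂ) : 0 ≤ concDen c γ F := by
  refine intervalIntegral.integral_nonneg (by linarith) fun ξ hξ => ?_
  have := one_sub_div_sq_nonneg hξ
  positivity

theorem concRatio_nonneg (hc : 0 ≤ c) (γ : ℝ) (F : ℝ → ℂ) : 0 ≤ concRatio c γ F := by
  rw [concRatio_eq]
  have := concNum_nonneg c γ F
  have := concDen_nonneg hc γ F
  positivity

theorem concDen_mono (hc : 0 ≤ c) {α α' : ℝ} (h : α' ≤ α) (hF : F ∈ PWspace c α) :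
    concDen c α' F ≤ concDen c α F :=
  intervalIntegral.integral_mono_on_of_le_Ioo (by linarith) (PWspace_anti hc h hF).2 hF.2
    fun _ hξ => mul_le_mul_of_nonneg_left (one_sub_div_sq_rpow_neg_le hξ h) (by positivity)

theorem concNum_anti {α α' : ℝ} (h0 : 0 ≤ α') (h : α' ≤ α) (c : ℝ) (F : ℝ → ℂ) :
    concNum c α F ≤ concNum c α' F := by
  have hint : ∀ γ : ℝ, 0 ≤ γ → IntervalIntegrable
      (fun t => ‖invTrans c F t‖ ^ 2 * (1 - t ^ 2) ^ γ) volume (-1) 1 := fun γ hγ =>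
    (((continuous_invTrans c F).norm.pow 2).mul
      ((Real.continuous_rpow_const hγ).comp (by fun_prop))).intervalIntegrable _ _
  refine intervalIntegral.integral_mono_on_of_le_Ioo (by norm_num) (hint α (h0.trans h))
    (hint α' h0) fun t ht => mul_le_mul_of_nonneg_left ?_ (by positivity)
  exact Real.rpow_le_rpow_of_exponent_ge (by nlinarith [ht.1, ht.2])
    (sub_le_self _ (sq_nonneg _)) h

theorem concNum_le (hc : 0 ≤ c) (hγ : 0 ≤ γ) (F : ℝ → ℂ) :
    concNum c γ F ≤ 2 * ((∫ ξ in (-c)..c, ‖F ξ‖) / (2 * Real.pi)) ^ 2 := by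
  have hpt : ∀ t ∈ Ι (-1 : ℝ) 1, ‖‖invTrans c F t‖ ^ 2 * (1 - t ^ 2) ^ γ‖ ≤
      ((∫ ξ in (-c)..c, ‖F ξ‖) / (2 * Real.pi)) ^ 2 := by
    intro t ht
    rw [uIoc_of_le (by norm_num)] at ht
    have ht2 : 0 ≤ 1 - t ^ 2 := by nlinarith [ht.1, ht.2]
    rw [Real.norm_of_nonneg (by positivity)]
    calc ‖invTrans c F t‖ ^ 2 * (1 - t ^ 2) ^ γ ≤ ‖invTrans c F t‖ ^ 2 * 1 :=
          mul_le_mul_of_nonneg_left (Real.rpow_le_one ht2 (sub_le_self _ (sq_nonneg _)) hγ)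
            (by positivity)
      _ ≤ _ := by rw [mul_one]; gcongr; exact norm_invTrans_le hc F t
  have hbound := intervalIntegral.norm_integral_le_of_norm_le_const hpt
  rw [Real.norm_eq_abs, show |(1 : ℝ) - -1| = 2 by norm_num, mul_comm] at hbound
  exact (le_abs_self _).trans hbound

theorem pi_sq_mul_concNum_le (hc : 0 ≤ c) (hγ : 0 ≤ γ) (hF : F ∈ PWspace c γ) :
    Real.pi ^ 2 * concNum c γ F ≤ c * concDen c γ F := by
  by_cases hFi : IntervalIntegrable F volume (-c) c
  · have hsq : IntervalIntegrable (fun ξ => ‖F ξ‖ ^ 2) volume (-c) c := by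
      simpa using (PWspace_anti hc hγ hF).2
    have hL2 : ∫ ξ in (-c)..c, ‖F ξ‖ ^ 2 ≤ concDen c γ F := by
      simpa [concDen] using concDen_mono hc hγ hF
    have hCS := sq_intervalIntegral_le_mul_integral_sq (by linarith) hFi.norm hsq
    calc Real.pi ^ 2 * concNum c γ F
        ≤ Real.pi ^ 2 * (2 * ((∫ ξ in (-c)..c, ‖F ξ‖) / (2 * Real.pi)) ^ 2) := by
          gcongr; exact concNum_le hc hγ F
      _ = (∫ ξ in (-c)..c, ‖F ξ‖) ^ 2 / 2 := by field_simp
      _ ≤ c * concDen c γ F := by nlinarith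
  · have hN : concNum c γ F = 0 := by
      simp [concNum, invTrans_eq_zero_of_not_intervalIntegrable hFi]
    rw [hN, mul_zero]
    exact mul_nonneg hc (concDen_nonneg hc γ F)

theorem concRatio_le (hc : 0 ≤ c) (hγ : 0 ≤ γ) (hF : F ∈ PWspace c γ) :
    concRatio c γ F ≤ 2 * c / Real.pi := by
  rw [concRatio_eq]
  rcases (concDen_nonneg hc γ F).eq_or_lt with hD | hD
  · rw [← hD, div_zero]
    positivity
  rw [div_le_div_iff₀ hD Real.pi_pos]
  nlinarith [pi_sq_mul_concNum_le hc hγ hF]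

theorem concRatio_anti (hc : 0 ≤ c) {α α' : ℝ} (h0 : 0 ≤ α') (h : α' ≤ α)
    (hF : F ∈ PWspace c α) : concRatio c α F ≤ concRatio c α' F := by
  have hN := concNum_anti h0 h c F
  have hD := concDen_mono hc h hF
  rcases (concDen_nonneg hc α' F).eq_or_lt with hD0 | hDpos
  · -- the bound `π² N ≤ c D` at `α'` forces both numerators to vanish
    have hN' : concNum c α' F = 0 := by
      have := pi_sq_mul_concNum_le hc h0 (PWspace_anti hc h hF)
      rw [← hD0, mul_zero] at this
      have hπ : 0 < Real.pi ^ 2 := by positivity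
      nlinarith [concNum_nonneg c α' F]
    rw [concRatio_eq, le_antisymm (hN.trans hN'.le) (concNum_nonneg c α F), mul_zero, zero_div]
    exact concRatio_nonneg hc α' F
  · rw [concRatio_eq, concRatio_eq]
    exact div_le_div₀ (by have := concNum_nonneg c α' F; positivity)
      (by gcongr) hDpos hD

noncomputable def infConcRatio (c γ : ℝ) (S : Submodule ℂ (ℝ → ℂ)) : ℝ :=
  sInf {x : ℝ | ∃ F ∈ S, F ≠ (0 : ℝ → ℂ) ∧ x = concRatio c γ F}

theorem infConcRatio_nonneg (hc : 0 ≤ c) (γ : ℝ) (S : Submodule ℂ (ℝ → ℂ)) :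
    0 ≤ infConcRatio c γ S :=
  Real.sInf_nonneg <| by
    rintro _ ⟨F, -, -, rfl⟩
    exact concRatio_nonneg hc γ F

theorem infConcRatio_le (hc : 0 ≤ c) {S : Submodule ℂ (ℝ → ℂ)} (hFS : F ∈ S) (hF : F ≠ 0) :
    infConcRatio c γ S ≤ concRatio c γ F := by
  refine csInf_le ⟨0, ?_⟩ ⟨F, hFS, hF, rfl⟩
  rintro _ ⟨G, -, -, rfl⟩
  exact concRatio_nonneg hc γ G

theorem infConcRatio_anti (hc : 0 ≤ c) {α α' : ℝ} (h0 : 0 ≤ α') (h : α' ≤ α)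
    {S : Submodule ℂ (ℝ → ℂ)} (hS : (S : Set (ℝ → ℂ)) ⊆ PWspace c α) (hS0 : S ≠ ⊥) :
    infConcRatio c α S ≤ infConcRatio c α' S := by
  obtain ⟨F, hFS, hF⟩ := Submodule.exists_mem_ne_zero_of_ne_bot hS0
  refine le_csInf ⟨_, F, hFS, hF, rfl⟩ ?_
  rintro _ ⟨G, hGS, hG, rfl⟩
  exact (infConcRatio_le hc hGS hG).trans (concRatio_anti hc h0 h (hS hGS))

theorem lamMaxMin_nonneg (hc : 0 ≤ c) (γ : ℝ) (n : ℕ) : 0 ≤ lamMaxMin c γ n :=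
  Real.sSup_nonneg <| by
    rintro _ ⟨S, -, -, rfl⟩
    exact infConcRatio_nonneg hc γ S

theorem infConcRatio_le_lamMaxMin (hc : 0 ≤ c) (hγ : 0 ≤ γ) {n : ℕ}
    {S : Submodule ℂ (ℝ → ℂ)} (hrank : Module.finrank ℂ S = n + 1)
    (hS : (S : Set (ℝ → ℂ)) ⊆ PWspace c γ) : infConcRatio c γ S ≤ lamMaxMin c γ n := by
  refine le_csSup ⟨2 * c / Real.pi, ?_⟩ ⟨S, hrank, hS, rfl⟩
  rintro _ ⟨T, hTrank, hT, rfl⟩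
  obtain ⟨F, hFT, hF⟩ :=
    Submodule.exists_mem_ne_zero_of_ne_bot (Submodule.ne_bot_of_finrank_eq_succ hTrank)
  exact (infConcRatio_le hc hFT hF).trans (concRatio_le hc hγ (hT hFT))

end

/-- Monotonicity of the eigenvalues `λ_n^{(γ)}(c)` with respect to the
parameter: for `α ≥ α' ≥ 0`, `λ_n^{(α)}(c) ≤ λ_n^{(α')}(c)` for every `n`. -/
theorem lam_monotone_in_alpha (c α α' : ℝ) (hc : 0 < c) (h0 : 0 ≤ α') (h : α' ≤ α) :
    ∀ n : ℕ, lamMaxMin c α n ≤ lamMaxMin c α' n := by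
  intro n
  refine Real.sSup_le ?_ (lamMaxMin_nonneg hc.le α' n)
  rintro _ ⟨S, hrank, hS, rfl⟩
  have hS' : (S : Set (ℝ → ℂ)) ⊆ PWspace c α' := hS.trans (PWspace_anti hc.le h)
  exact (infConcRatio_anti hc.le h0 h hS (Submodule.ne_bot_of_finrank_eq_succ hrank)).trans
    (infConcRatio_le_lamMaxMin hc.le h0 hrank hS')
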